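/- arXiv:2411.10530 — 3 statements merged into one kernel-verified Lean document; each statement's English description precedes it below -/
import Mathlib

section
/- Let C be a monoidal groupoid (every morphism is invertible) with tensor unit 𝟙, and assume C is group-like: for every object X there exists an object X* with X ⊗ X* ≅ 𝟙. Then for all objects X, Y and all morphisms f, f' : X ⟶ Y there exists a unique h : 𝟙 ⟶ 𝟙 such that η_X(h) ≫ f = f'. In particular the action of the group Aut(𝟙) on Hom(X,Y) given by h • f = η_X(h) ≫ f is free and transitive whenever Hom(X,Y) is nonempty. -/
/-!
Since `X ⊗ X* ≅ 𝟙` and `X* ⊗ X** ≅ 𝟙`, the left and right inverses `X` and `X**` of `X*` are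
isomorphic, so `X*` is a two-sided inverse of `X` and `tensorLeft X` is an autoequivalence.
Hence `X ◁ -` maps `End 𝟙` bijectively onto `End (X ⊗ 𝟙)`, i.e. `η_X` is a bijection
`End 𝟙 ≃ End X`, and composing with the isomorphism `f` carries `End X` bijectively onto
`X ⟶ Y`.
-/

open CategoryTheory MonoidalCategory

/-- `η_X(h) = ρ_X⁻¹ ≫ (X ◁ h) ≫ ρ_X`. -/
def eta {C : Type*} [Groupoid C] [MonoidalCategory C] (X : C) (h : 𝟙_ C ⟶ 𝟙_ C) : X ⟶ X :=
  (ρ_ X).inv ≫ (X ◁ h) ≫ (ρ_ X).hom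

namespace CategoryTheory.MonoidalCategory

variable {C : Type*} [Category C] [MonoidalCategory C]

def tensorLeftCompTensorLeftIso {X Y : C} (e : X ⊗ Y ≅ 𝟙_ C) :
    tensorLeft Y ⋙ tensorLeft X ≅ 𝟭 C :=
  (tensorLeftTensor X Y).symm ≪≫ (curriedTensor C).mapIso e ≪≫ leftUnitorNatIso C

def leftInverseIsoRightInverse {X Y Z : C} (e : X ⊗ Y ≅ 𝟙_ C) (d : Y ⊗ Z ≅ 𝟙_ C) : X ≅ Z :=
  (ρ_ X).symm ≪≫ whiskerLeftIso X d.symm ≪≫ (α_ X Y Z).symm ≪≫ whiskerRightIso e Z ≪≫ λ_ Z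

def tensorLeftEquivalence {X Y : C} (e : X ⊗ Y ≅ 𝟙_ C) (d : Y ⊗ X ≅ 𝟙_ C) : C ≌ C :=
  Equivalence.mk (tensorLeft X) (tensorLeft Y)
    (tensorLeftCompTensorLeftIso d).symm (tensorLeftCompTensorLeftIso e)

end CategoryTheory.MonoidalCategory

lemma eta_bijective {C : Type*} [Groupoid C] [MonoidalCategory C] {X : C}
    (hX : (tensorLeft X).FullyFaithful) : Function.Bijective (eta X) :=
  ((ρ_ X).homCongr (ρ_ X)).bijective.comp (hX.map_bijective (𝟙_ C) (𝟙_ C))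

/-- In a group-like monoidal groupoid, `Hom(X, Y)` is a torsor under `Aut(𝟙)`:
for any `f f' : X ⟶ Y` there is a unique `h : 𝟙 ⟶ 𝟙` with `η_X(h) ≫ f = f'`. -/
theorem hom_is_torsor {C : Type*} [Groupoid C] [MonoidalCategory C]
    (grouplike : ∀ X : C, ∃ Xstar : C, Nonempty (X ⊗ Xstar ≅ 𝟙_ C)) :
    ∀ (X Y : C) (f f' : X ⟶ Y), ∃! h : 𝟙_ C ⟶ 𝟙_ C, eta X h ≫ f = f' := by
  intro X Y f f'
  obtain ⟨Xstar, ⟨e⟩⟩ := grouplike X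
  obtain ⟨Xss, ⟨d⟩⟩ := grouplike Xstar
  have e' : Xstar ⊗ X ≅ 𝟙_ C := whiskerLeftIso Xstar (leftInverseIsoRightInverse e d) ≪≫ d
  have hX := (tensorLeftEquivalence e e').fullyFaithfulFunctor
  exact ((asIso f).homToEquiv.bijective.comp (eta_bijective hX)).existsUnique f'
end

section
/- Let C be a monoidal category. For all objects X, Y, Y', Y'' and all morphisms f : Y ⊗ X ⟶ X ⊗ Y, g : Y' ⊗ X ⟶ X ⊗ Y', k : Y'' ⊗ X ⟶ X ⊗ Y'', the partial composition law +₂ is associative up to the associator: ((f +₂ g) +₂ k) ≫ (X ◁ α_{Y,Y',Y''}) = (α_{Y,Y',Y''} ▷ X) ≫ (f +₂ (g +₂ k)). -/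
open CategoryTheory MonoidalCategory

/-- The second partial composition law of the commutator biextension. -/
def add2 {C : Type*} [Category C] [MonoidalCategory C] {X Y Y' : C}
    (f : Y ⊗ X ⟶ X ⊗ Y) (g : Y' ⊗ X ⟶ X ⊗ Y') : (Y ⊗ Y') ⊗ X ⟶ X ⊗ (Y ⊗ Y') :=
  (α_ Y Y' X).hom ≫ (Y ◁ g) ≫ (α_ Y X Y').inv ≫ (f ▷ Y') ≫ (α_ X Y Y').hom

/-- `+₂` is associative up to the associator. -/
theorem add2_assoc {C : Type*} [Category C] [MonoidalCategory C]
    {X Y Y' Y'' : C} (f : Y ⊗ X ⟶ X ⊗ Y) (g : Y' ⊗ X ⟶ X ⊗ Y')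
    (k : Y'' ⊗ X ⟶ X ⊗ Y'') :
    add2 (add2 f g) k ≫ (X ◁ (α_ Y Y' Y'').hom) =
      ((α_ Y Y' Y'').hom ▷ X) ≫ add2 f (add2 g k) := by
  simp only [add2, MonoidalCategory.whiskerLeft_comp, MonoidalCategory.comp_whiskerRight, Category.assoc]
  monoidal
end

section
/- Let C be a monoidal category. For all objects X, X', Y, Y' and all morphisms f : Y ⊗ X ⟶ X ⊗ Y, f' : Y ⊗ X' ⟶ X' ⊗ Y, g : Y' ⊗ X ⟶ X ⊗ Y', g' : Y' ⊗ X' ⟶ X' ⊗ Y', the two partial composition laws satisfy the interchange law: (f +₁ f') +₂ (g +₁ g') = (f +₂ g) +₁ (f' +₂ g') as morphisms (Y ⊗ Y') ⊗ (X ⊗ X') ⟶ (X ⊗ X') ⊗ (Y ⊗ Y'). -/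
open CategoryTheory MonoidalCategory

/-- The first partial composition law of the commutator biextension. -/
def add1 {C : Type*} [Category C] [MonoidalCategory C] {X X' Y : C}
    (f : Y ⊗ X ⟶ X ⊗ Y) (f' : Y ⊗ X' ⟶ X' ⊗ Y) : Y ⊗ (X ⊗ X') ⟶ (X ⊗ X') ⊗ Y :=
  (α_ Y X X').inv ≫ (f ▷ X') ≫ (α_ X Y X').hom ≫ (X ◁ f') ≫ (α_ X X' Y).inv

/-- The interchange law between the two partial composition laws of the
commutator biextension. -/
theorem add1_add2_interchange {C : Type*} [Category C] [MonoidalCategory C]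
    {X X' Y Y' : C} (f : Y ⊗ X ⟶ X ⊗ Y) (f' : Y ⊗ X' ⟶ X' ⊗ Y)
    (g : Y' ⊗ X ⟶ X ⊗ Y') (g' : Y' ⊗ X' ⟶ X' ⊗ Y') :
    add2 (add1 f f') (add1 g g') = add1 (add2 f g) (add2 f' g') := by
  calc add2 (add1 f f') (add1 g g')
      = (α_ (Y ⊗ Y') X X').inv ≫ (α_ Y Y' X).hom ▷ X' ≫ (α_ Y (Y' ⊗ X) X').hom ≫
        Y ◁ g ▷ X' ≫ (α_ Y (X ⊗ Y') X').inv ≫ (α_ Y X Y').inv ▷ X' ≫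
        (α_ (Y ⊗ X) Y' X').hom ≫ ((Y ⊗ X) ◁ g' ≫ f ▷ (X' ⊗ Y')) ≫
        (α_ X Y (X' ⊗ Y')).hom ≫ X ◁ (α_ Y X' Y').inv ≫ X ◁ f' ▷ Y' ≫
        X ◁ (α_ X' Y Y').hom ≫ (α_ X X' (Y ⊗ Y')).inv := by
        simp only [add1, add2]; monoidal
    _ = (α_ (Y ⊗ Y') X X').inv ≫ (α_ Y Y' X).hom ▷ X' ≫ (α_ Y (Y' ⊗ X) X').hom ≫
        Y ◁ g ▷ X' ≫ (α_ Y (X ⊗ Y') X').inv ≫ (α_ Y X Y').inv ▷ X' ≫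
        (α_ (Y ⊗ X) Y' X').hom ≫ (f ▷ (Y' ⊗ X') ≫ (X ⊗ Y) ◁ g') ≫
        (α_ X Y (X' ⊗ Y')).hom ≫ X ◁ (α_ Y X' Y').inv ≫ X ◁ f' ▷ Y' ≫
        X ◁ (α_ X' Y Y').hom ≫ (α_ X X' (Y ⊗ Y')).inv := by
        rw [whisker_exchange]
    _ = add1 (add2 f g) (add2 f' g') := by
        simp only [add1, add2]; monoidal
end
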